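/- Perfect-tensor/distance-3 property of the five-qubit code: for every Pauli operator Q on five qubits whose weight is 1 or 2, and for all α, β ∈ ℂ with |α|² + |β|² = 1, the state ψ := α|0̄⟩ + β|1̄⟩ satisfies ⟨ψ, Qψ⟩ = 0; equivalently, every reduced density matrix of ψ on at most two of the five qubits is maximally mixed. -/
import Mathlib


open Complex Matrix

noncomputable section

/-- Computational basis labels for `L` qubits: bit strings `b : Fin L → Fin 2`. -/
abbrev QBasis (L : ℕ) := Fin L → Fin 2

/-- State vectors of `L` qubits (the Hilbert space `H_L = (ℂ²)^{⊗L}`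
in its computational basis coordinates). -/
abbrev QVec (L : ℕ) := QBasis L → ℂ

/-- Operators on `L` qubits, written as matrices in the computational basis. -/
abbrev QOp (L : ℕ) := Matrix (QBasis L) (QBasis L) ℂ

/-- The inner product `⟨φ, ψ⟩`, conjugate-linear in the first argument. -/
def qInner {L : ℕ} (φ ψ : QVec L) : ℂ := ∑ b, (starRingEnd ℂ) (φ b) * ψ b

/-- `+1` for bit `0`, `-1` for bit `1`. -/
def bitSign (x : Fin 2) : ℂ := if x = 0 then 1 else -1

/-- Flip the `k`-th bit of a bit string. -/
def flipBit {L : ℕ} (k : Fin L) (b : QBasis L) : QBasis L :=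
  Function.update b k (1 - b k)

/-- Pauli `X` on the (1-based) site `k`; the identity if `k` is out of range. -/
def siteX (L : ℕ) (k : ℕ) : QOp L :=
  if h : 1 ≤ k ∧ k ≤ L then
    Matrix.of fun b c => if c = flipBit ⟨k - 1, by omega⟩ b then 1 else 0
  else 1

/-- Pauli `Y` on the (1-based) site `k`; the identity if `k` is out of range. -/
def siteY (L : ℕ) (k : ℕ) : QOp L :=
  if h : 1 ≤ k ∧ k ≤ L then
    Matrix.of fun b c =>
      if c = flipBit ⟨k - 1, by omega⟩ b then -Complex.I * bitSign (b ⟨k - 1, by omega⟩)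
      else 0
  else 1

/-- Pauli `Z` on the (1-based) site `k`; the identity if `k` is out of range. -/
def siteZ (L : ℕ) (k : ℕ) : QOp L :=
  if h : 1 ≤ k ∧ k ≤ L then
    Matrix.diagonal fun b => bitSign (b ⟨k - 1, by omega⟩)
  else 1

/-- The ordered operator product `f 1 * f 2 * ⋯ * f n`. -/
def opProd (L : ℕ) (f : ℕ → QOp L) (n : ℕ) : QOp L :=
  ((List.range n).map fun i => f (i + 1)).prod

/-- The Jordan–Wigner Majorana operator `γ_m` (1-based, `1 ≤ m ≤ 2L`):
`γ_{2k-1} = Z_1 ⋯ Z_{k-1} X_k` and `γ_{2k} = Z_1 ⋯ Z_{k-1} Y_k`. -/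
def majorana (L : ℕ) (m : ℕ) : QOp L :=
  opProd L (siteZ L) ((m + 1) / 2 - 1) *
    (if m % 2 = 1 then siteX L ((m + 1) / 2) else siteY L ((m + 1) / 2))

/-- The total parity operator `P = Z_1 Z_2 ⋯ Z_L`. -/
def totalParity (L : ℕ) : QOp L := opProd L (siteZ L) L


/-- Site index taken modulo 5 with representatives in `{1, …, 5}`. -/
def idx5 (m : ℕ) : ℕ := (m - 1) % 5 + 1

/-- The stabilizer generators `S_k = X_k Z_{k+1} Z_{k+2} X_{k+3}` of the `[[5,1,3]]`
code, site indices modulo 5 with representatives in `{1, …, 5}`. -/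
def stab5 (k : ℕ) : QOp 5 :=
  siteX 5 (idx5 k) * siteZ 5 (idx5 (k + 1)) * siteZ 5 (idx5 (k + 2)) *
    siteX 5 (idx5 (k + 3))

/-- The code space of the five-qubit code: the joint `+1` eigenspace of
`S_1, S_2, S_3, S_4`. -/
def codeSpace5 : Submodule ℂ (QVec 5) :=
  ⨅ k ∈ Finset.Icc 1 4, LinearMap.ker ((stab5 k).mulVecLin - LinearMap.id)
/-- The single-site Pauli factor chosen by `q k ∈ {0 = I, 1 = X, 2 = Y, 3 = Z}`. -/
def pauliAt (L : ℕ) (q : ℕ → Fin 4) (k : ℕ) : QOp L :=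
  if q k = 1 then siteX L k else if q k = 2 then siteY L k
  else if q k = 3 then siteZ L k else 1

/-- The Pauli operator `Q_1 ⊗ ⋯ ⊗ Q_L` determined by the choice function `q`. -/
def pauliOp (L : ℕ) (q : ℕ → Fin 4) : QOp L := opProd L (pauliAt L q) L

/-- The weight of a Pauli operator: the number of sites carrying a non-identity
factor. -/
def pauliWeight (L : ℕ) (q : ℕ → Fin 4) : ℕ :=
  ((Finset.Icc 1 L).filter fun k => q k ≠ 0).card


/-! ### Auxiliary machinery: generalized Pauli matrices -/

/-- Mod-2 dot product of two bit strings. -/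
def dotp (u v : QBasis 5) : Fin 2 := ∑ i, u i * v i

/-- The character `(-1)^{⟨u,b⟩}`. -/
def chi (u b : QBasis 5) : ℂ := bitSign (dotp u b)

lemma bitSign_add (x y : Fin 2) : bitSign (x + y) = bitSign x * bitSign y := by
  fin_cases x <;> fin_cases y <;>
    norm_num [bitSign, show ((1 : Fin 2) + 1) = 0 from rfl]

lemma dotp_add_right (u v w : QBasis 5) : dotp u (v + w) = dotp u v + dotp u w := by
  simp [dotp, mul_add, Finset.sum_add_distrib]

lemma dotp_add_left (u v w : QBasis 5) : dotp (u + v) w = dotp u w + dotp v w := by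
  simp [dotp, add_mul, Finset.sum_add_distrib]

lemma chi_add_right (u v w : QBasis 5) : chi u (v + w) = chi u v * chi u w := by
  rw [chi, dotp_add_right, bitSign_add]; rfl

lemma chi_add_left (u v w : QBasis 5) : chi (u + v) w = chi u w * chi v w := by
  rw [chi, dotp_add_left, bitSign_add]; rfl

lemma chi_eq_one {u v : QBasis 5} (h : dotp u v = 0) : chi u v = 1 := by
  rw [chi, h]; norm_num [bitSign]

lemma chi_real (u b : QBasis 5) : (starRingEnd ℂ) (chi u b) = chi u b := by
  unfold chi bitSign; split <;> simp

lemma chi_zero_left (b : QBasis 5) : chi 0 b = 1 :=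
  chi_eq_one (by simp [dotp])

/-- A generalized Pauli matrix: flip by `v`, diagonal character `u`, phase `ε`. -/
def GP (ε : ℂ) (u v : QBasis 5) : QOp 5 :=
  Matrix.of fun b c => if c = b + v then ε * chi u b else 0

lemma GP_mul (ε ε' : ℂ) (u v u' v' : QBasis 5) :
    GP ε u v * GP ε' u' v' = GP (ε * ε' * chi u' v) (u + u') (v + v') := by
  ext b c
  rw [Matrix.mul_apply, Finset.sum_eq_single (b + v)]
  · show (if b + v = b + v then ε * chi u b else 0) *
        (if c = b + v + v' then ε' * chi u' (b + v) else 0)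
        = if c = b + (v + v') then ε * ε' * chi u' v * chi (u + u') b else 0
    rw [if_pos rfl, chi_add_right, chi_add_left, ← add_assoc]
    by_cases hc : c = b + v + v'
    · rw [if_pos hc, if_pos hc]; ring
    · rw [if_neg hc, if_neg hc, mul_zero]
  · intro d _ hd
    simp only [GP, Matrix.of_apply, if_neg hd, zero_mul]
  · intro h; exact absurd (Finset.mem_univ _) h

lemma GP_congr {ε ε' : ℂ} {u u' v v' : QBasis 5} (h1 : ε = ε') (h2 : u = u')
    (h3 : v = v') : GP ε u v = GP ε' u' v' := by
  rw [h1, h2, h3]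

lemma neg_GP (ε : ℂ) (u v : QBasis 5) : GP (-ε) u v = -GP ε u v := by
  ext b c
  by_cases h : c = b + v <;> simp [GP, h]

lemma GP_mulVec (ε : ℂ) (u v : QBasis 5) (x : QVec 5) (b : QBasis 5) :
    (GP ε u v *ᵥ x) b = ε * chi u b * x (b + v) := by
  simp only [Matrix.mulVec, dotProduct]
  rw [Finset.sum_eq_single (b + v)]
  · simp [GP]
  · intro d _ hd
    simp only [GP, Matrix.of_apply, if_neg hd, zero_mul]
  · intro h; exact absurd (Finset.mem_univ _) h

lemma add_add_cancel_bits (b v : QBasis 5) : b + v + v = b := by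
  funext j
  have h : ∀ x y : Fin 2, x + y + y = x := by decide
  simp only [Pi.add_apply]
  exact h _ _

/-- Moving a real symmetric generalized Pauli across the inner product. -/
lemma qInner_GP_swap (u v : QBasis 5) (h : dotp u v = 0) (φ w : QVec 5) :
    qInner φ (GP 1 u v *ᵥ w) = qInner (GP 1 u v *ᵥ φ) w := by
  unfold qInner
  simp only [GP_mulVec, one_mul, _root_.map_mul, chi_real]
  apply Fintype.sum_equiv (Equiv.addRight v)
  intro b
  simp only [Equiv.coe_addRight, add_add_cancel_bits, chi_add_right, chi_eq_one h, chi_real,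
    _root_.map_mul]
  ring

lemma flip_eq (i : Fin 5) (b : QBasis 5) : flipBit i b = b + Pi.single i 1 := by
  funext j
  rcases eq_or_ne j i with rfl | hj
  · have h1 : ∀ x : Fin 2, 1 - x = x + 1 := by decide
    simp [flipBit, Function.update_self, Pi.single_eq_same, h1]
  · simp [flipBit, Function.update_of_ne hj, Pi.single_eq_of_ne hj]

lemma dotp_single_left (i : Fin 5) (b : QBasis 5) :
    dotp (Pi.single i 1) b = b i := by
  rw [dotp, Finset.sum_eq_single i]
  · simp
  · intro d _ hd; simp [Pi.single_eq_of_ne hd]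
  · intro h; exact absurd (Finset.mem_univ _) h

lemma chi_single_left (i : Fin 5) (b : QBasis 5) :
    chi (Pi.single i 1) b = bitSign (b i) := by
  rw [chi, dotp_single_left]

lemma one_eq_GP : (1 : QOp 5) = GP 1 0 0 := by
  ext b c
  simp [GP, Matrix.one_apply, chi_zero_left, eq_comm]

lemma siteX_eq (k : ℕ) (i : Fin 5) (h : k = i.1 + 1) :
    siteX 5 k = GP 1 0 (Pi.single i 1) := by
  subst h
  rw [siteX, dif_pos (by omega : 1 ≤ i.1 + 1 ∧ i.1 + 1 ≤ 5)]
  have hi : (⟨i.1 + 1 - 1, by omega⟩ : Fin 5) = i := by ext; simp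
  ext b c
  simp [GP, hi, flip_eq, chi_zero_left]

lemma siteY_eq (k : ℕ) (i : Fin 5) (h : k = i.1 + 1) :
    siteY 5 k = GP (-Complex.I) (Pi.single i 1) (Pi.single i 1) := by
  subst h
  rw [siteY, dif_pos (by omega : 1 ≤ i.1 + 1 ∧ i.1 + 1 ≤ 5)]
  have hi : (⟨i.1 + 1 - 1, by omega⟩ : Fin 5) = i := by ext; simp
  ext b c
  simp [GP, hi, flip_eq, chi_single_left]

lemma siteZ_eq (k : ℕ) (i : Fin 5) (h : k = i.1 + 1) :
    siteZ 5 k = GP 1 (Pi.single i 1) 0 := by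
  subst h
  rw [siteZ, dif_pos (by omega : 1 ≤ i.1 + 1 ∧ i.1 + 1 ≤ 5)]
  have hi : (⟨i.1 + 1 - 1, by omega⟩ : Fin 5) = i := by ext; simp
  ext b c
  rcases eq_or_ne b c with rfl | hbc
  · simp [GP, hi, chi_single_left]
  · rw [Matrix.diagonal_apply_ne _ hbc]
    simp [GP, hi, Ne.symm hbc]

/-- The `Z`-part of the stabilizer generators. -/
def uS : ℕ → QBasis 5
  | 1 => ![0,1,1,0,0]
  | 2 => ![0,0,1,1,0]
  | 3 => ![0,0,0,1,1]
  | _ => ![1,0,0,0,1]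

/-- The `X`-part of the stabilizer generators. -/
def vS : ℕ → QBasis 5
  | 1 => ![1,0,0,1,0]
  | 2 => ![0,1,0,0,1]
  | 3 => ![1,0,1,0,0]
  | _ => ![0,1,0,1,0]

lemma stab5_eq_aux (a b c d : ℕ) (i j l m : Fin 5) (ha : a = i.1 + 1) (hb : b = j.1 + 1)
    (hc : c = l.1 + 1) (hd : d = m.1 + 1)
    (uu vv : QBasis 5)
    (h1 : dotp (Pi.single j 1) (Pi.single i 1) = 0)
    (h2 : dotp (Pi.single l 1) (Pi.single i 1 + 0) = 0)
    (h3 : dotp 0 (Pi.single i 1 + 0 + 0) = 0)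
    (hvv : Pi.single i 1 + 0 + 0 + Pi.single m 1 = vv)
    (huu : (0 : QBasis 5) + Pi.single j 1 + Pi.single l 1 + 0 = uu) :
    siteX 5 a * siteZ 5 b * siteZ 5 c * siteX 5 d = GP 1 uu vv := by
  rw [siteX_eq a i ha, siteZ_eq b j hb, siteZ_eq c l hc, siteX_eq d m hd,
    GP_mul, GP_mul, GP_mul, chi_eq_one h1, chi_eq_one h2, chi_eq_one h3, hvv, huu]
  norm_num

lemma stab5_eq (k : Fin 4) : stab5 (k.1 + 1) = GP 1 (uS (k.1 + 1)) (vS (k.1 + 1)) := by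
  fin_cases k
  · rw [show stab5 (0 + 1) = siteX 5 1 * siteZ 5 2 * siteZ 5 3 * siteX 5 4 by rw [stab5]; norm_num [idx5]]
    exact stab5_eq_aux 1 2 3 4 0 1 2 3 rfl rfl rfl rfl _ _ (by decide) (by decide) (by decide)
      (by decide) (by decide)
  · rw [show stab5 (1 + 1) = siteX 5 2 * siteZ 5 3 * siteZ 5 4 * siteX 5 5 by rw [stab5]; norm_num [idx5]]
    exact stab5_eq_aux 2 3 4 5 1 2 3 4 rfl rfl rfl rfl _ _ (by decide) (by decide) (by decide)
      (by decide) (by decide)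
  · rw [show stab5 (2 + 1) = siteX 5 3 * siteZ 5 4 * siteZ 5 5 * siteX 5 1 by rw [stab5]; norm_num [idx5]]
    exact stab5_eq_aux 3 4 5 1 2 3 4 0 rfl rfl rfl rfl _ _ (by decide) (by decide) (by decide)
      (by decide) (by decide)
  · rw [show stab5 (3 + 1) = siteX 5 4 * siteZ 5 5 * siteZ 5 1 * siteX 5 2 by rw [stab5]; norm_num [idx5]]
    exact stab5_eq_aux 4 5 1 2 3 4 0 1 rfl rfl rfl rfl _ _ (by decide) (by decide) (by decide)
      (by decide) (by decide)

/-- Phase of a single-site Pauli factor. -/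
def sgnP : Fin 4 → ℂ := fun a => if a = 2 then -Complex.I else 1
/-- `Z`-bit of a single-site Pauli factor. -/
def zbP : Fin 4 → Fin 2 := fun a => if a = 2 ∨ a = 3 then 1 else 0
/-- `X`-bit of a single-site Pauli factor. -/
def xbP : Fin 4 → Fin 2 := fun a => if a = 1 ∨ a = 2 then 1 else 0

lemma pauliAt_eq (q : ℕ → Fin 4) (k : ℕ) (i : Fin 5) (h : k = i.1 + 1) :
    pauliAt 5 q k = GP (sgnP (q k)) (Pi.single i (zbP (q k))) (Pi.single i (xbP (q k))) := by
  unfold pauliAt sgnP zbP xbP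
  generalize q k = a
  fin_cases a
  · simpa using one_eq_GP
  · simpa using siteX_eq k i h
  · simpa using siteY_eq k i h
  · simpa using siteZ_eq k i h

lemma pauliOp_eq (q : ℕ → Fin 4) :
    ∃ ε : ℂ, pauliOp 5 q
      = GP ε (fun i => zbP (q (i.1 + 1))) (fun i => xbP (q (i.1 + 1))) := by
  have hexp : pauliOp 5 q = pauliAt 5 q 1 * (pauliAt 5 q 2 * (pauliAt 5 q 3 *
      (pauliAt 5 q 4 * (pauliAt 5 q 5 * 1)))) := rfl
  have hu : Pi.single (0 : Fin 5) (zbP (q 1)) + (Pi.single (1 : Fin 5) (zbP (q 2)) +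
      (Pi.single (2 : Fin 5) (zbP (q 3)) + (Pi.single (3 : Fin 5) (zbP (q 4)) + Pi.single (4 : Fin 5) (zbP (q 5)))))
      = (fun i : Fin 5 => zbP (q (i.1 + 1))) := by
    funext j; fin_cases j <;> simp [Pi.single_apply]
  have hv : Pi.single (0 : Fin 5) (xbP (q 1)) + (Pi.single (1 : Fin 5) (xbP (q 2)) +
      (Pi.single (2 : Fin 5) (xbP (q 3)) + (Pi.single (3 : Fin 5) (xbP (q 4)) + Pi.single (4 : Fin 5) (xbP (q 5)))))
      = (fun i : Fin 5 => xbP (q (i.1 + 1))) := by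
    funext j; fin_cases j <;> simp [Pi.single_apply]
  exact ⟨_, by
    rw [hexp, mul_one, pauliAt_eq q 1 0 rfl, pauliAt_eq q 2 1 rfl, pauliAt_eq q 3 2 rfl,
      pauliAt_eq q 4 3 rfl, pauliAt_eq q 5 4 rfl, GP_mul, GP_mul, GP_mul, GP_mul, hu, hv]⟩

set_option maxRecDepth 4000 in
lemma exists_anticomm5 : ∀ x1 x2 x3 x4 x5 : Fin 4,
    (((Finset.univ.filter fun i => ![x1,x2,x3,x4,x5] i ≠ 0).card = 1 ∨
      (Finset.univ.filter fun i => ![x1,x2,x3,x4,x5] i ≠ 0).card = 2)) →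
    ∃ k : Fin 4,
      dotp (fun i => zbP (![x1,x2,x3,x4,x5] i)) (vS (k.1 + 1))
        + dotp (uS (k.1 + 1)) (fun i => xbP (![x1,x2,x3,x4,x5] i)) = 1 := by
  decide

lemma exists_anticomm (a : Fin 5 → Fin 4)
    (h : (Finset.univ.filter fun i => a i ≠ 0).card = 1 ∨
      (Finset.univ.filter fun i => a i ≠ 0).card = 2) :
    ∃ k : Fin 4,
      dotp (fun i => zbP (a i)) (vS (k.1 + 1)) + dotp (uS (k.1 + 1)) (fun i => xbP (a i)) = 1 := by
  have ha : ![a 0, a 1, a 2, a 3, a 4] = a := by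
    funext j; fin_cases j <;> rfl
  have h5 := exists_anticomm5 (a 0) (a 1) (a 2) (a 3) (a 4)
  rw [ha] at h5
  exact h5 h

set_option maxRecDepth 10000 in
lemma stab_selfdot : ∀ k : Fin 4, dotp (uS (k.1 + 1)) (vS (k.1 + 1)) = 0 := by
  decide

lemma qInner_add_left (φ1 φ2 ψ : QVec 5) :
    qInner (φ1 + φ2) ψ = qInner φ1 ψ + qInner φ2 ψ := by
  simp [qInner, add_mul, Finset.sum_add_distrib]

lemma qInner_add_right (φ ψ1 ψ2 : QVec 5) :
    qInner φ (ψ1 + ψ2) = qInner φ ψ1 + qInner φ ψ2 := by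
  simp [qInner, mul_add, Finset.sum_add_distrib]

lemma qInner_smul_left (s : ℂ) (φ ψ : QVec 5) :
    qInner (s • φ) ψ = (starRingEnd ℂ) s * qInner φ ψ := by
  simp [qInner, Finset.mul_sum, mul_assoc]

lemma qInner_smul_right (s : ℂ) (φ ψ : QVec 5) :
    qInner φ (s • ψ) = s * qInner φ ψ := by
  simp [qInner, Finset.mul_sum, mul_left_comm]

lemma qInner_neg_right (φ ψ : QVec 5) : qInner φ (-ψ) = -qInner φ ψ := by
  simp [qInner]

/-- perfect-tensor/distance-3 property of the five-qubit code: every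
Pauli operator `Q` of weight 1 or 2 has vanishing expectation value
`⟨ψ, Q ψ⟩ = 0` in every code state `ψ = α |0̄⟩ + β |1̄⟩` with `|α|² + |β|² = 1`. -/
theorem five_qubit_code_perfect_tensor (ψ0 ψ1 : QVec 5)
    (h0C : ∀ k ∈ Finset.Icc 1 4, stab5 k *ᵥ ψ0 = ψ0)
    (h1C : ∀ k ∈ Finset.Icc 1 4, stab5 k *ᵥ ψ1 = ψ1)
    (h0n : qInner ψ0 ψ0 = 1) (h1n : qInner ψ1 ψ1 = 1)
    (h0P : totalParity 5 *ᵥ ψ0 = ψ0)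
    (h1P : totalParity 5 *ᵥ ψ1 = -ψ1)
    (q : ℕ → Fin 4) (hw : pauliWeight 5 q = 1 ∨ pauliWeight 5 q = 2)
    (α β : ℂ) (hαβ : Complex.normSq α + Complex.normSq β = 1) :
    qInner (α • ψ0 + β • ψ1) (pauliOp 5 q *ᵥ (α • ψ0 + β • ψ1)) = 0 := by
  obtain ⟨ε, hQ⟩ := pauliOp_eq q
  have hcard : (Finset.univ.filter fun i : Fin 5 => q (i.1 + 1) ≠ 0).card
      = pauliWeight 5 q := by
    have hinj : Function.Injective (fun i : Fin 5 => i.1 + 1) := by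
      intro a b h
      simp only at h
      exact Fin.val_injective (by omega)
    rw [pauliWeight,
      show (Finset.Icc 1 5 : Finset ℕ) = Finset.univ.image (fun i : Fin 5 => i.1 + 1) by decide,
      Finset.filter_image, Finset.card_image_of_injective _ hinj]
  obtain ⟨k, hk⟩ := exists_anticomm (fun i => q (i.1 + 1)) (by rw [hcard]; exact hw)
  set u : QBasis 5 := fun i => zbP (q (i.1 + 1)) with hu
  set v : QBasis 5 := fun i => xbP (q (i.1 + 1)) with hv
  have hk' : dotp u (vS (k.1 + 1)) + dotp (uS (k.1 + 1)) v = 1 := hk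
  have hK : (k.1 + 1) ∈ Finset.Icc 1 4 := by
    simp only [Finset.mem_Icc]
    omega
  have hS0 : stab5 (k.1 + 1) *ᵥ ψ0 = ψ0 := h0C _ hK
  have hS1 : stab5 (k.1 + 1) *ᵥ ψ1 = ψ1 := h1C _ hK
  have hsign : chi u (vS (k.1 + 1)) = -chi (uS (k.1 + 1)) v := by
    have h2 : ∀ d1 d2 : Fin 2, d1 + d2 = 1 → bitSign d1 = -bitSign d2 := by
      intro d1 d2 h
      fin_cases d1 <;> fin_cases d2 <;>
        first
          | exact absurd h (by decide)
          | norm_num [bitSign, Fin.ext_iff]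
    exact h2 _ _ hk'
  have hQS : pauliOp 5 q * stab5 (k.1 + 1) = -(stab5 (k.1 + 1) * pauliOp 5 q) := by
    rw [hQ, stab5_eq k, GP_mul, GP_mul, ← neg_GP]
    exact GP_congr (by rw [hsign]; ring) (add_comm _ _) (add_comm _ _)
  have hswap : ∀ (φ w : QVec 5),
      qInner φ (stab5 (k.1 + 1) *ᵥ w) = qInner (stab5 (k.1 + 1) *ᵥ φ) w := by
    intro φ w
    rw [stab5_eq k]
    exact qInner_GP_swap _ _ (stab_selfdot k) φ w
  have main : ∀ φ χ : QVec 5, stab5 (k.1 + 1) *ᵥ φ = φ → stab5 (k.1 + 1) *ᵥ χ = χ →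
      qInner φ (pauliOp 5 q *ᵥ χ) = 0 := by
    intro φ χ hφ hχ
    have h1 : qInner φ (pauliOp 5 q *ᵥ χ) = -qInner φ (pauliOp 5 q *ᵥ χ) := by
      conv_lhs => rw [← hχ, Matrix.mulVec_mulVec, hQS, Matrix.neg_mulVec,
        ← Matrix.mulVec_mulVec]
      rw [qInner_neg_right, hswap, hφ]
    linear_combination h1 / 2
  simp only [Matrix.mulVec_add, Matrix.mulVec_smul, qInner_add_left, qInner_add_right,
    qInner_smul_left, qInner_smul_right, main ψ0 ψ0 hS0 hS0, main ψ0 ψ1 hS0 hS1,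
    main ψ1 ψ0 hS1 hS0, main ψ1 ψ1 hS1 hS1, mul_zero, add_zero, zero_add]

end
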